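/- Let G be a tree, let V(G) be partitioned into parts, and for a search tree T* on G define the alternation number alt(T*) as the maximum, over all nodes z, of the number of edges (x,y) on the path from the root of T* to z such that x and y lie in different parts of the partition. Let T' be obtained from a search tree T on G by rotating an edge (x,y). If x and y lie in the same part of the partition, then alt(T') = alt(T); otherwise |alt(T') − alt(T)| ≤ 2. -/

import Mathlib

/-- A rooted tree (or the empty tree) on a subset `supp` of the vertex type `V`,
represented by parent pointers. -/
structure RTree (V : Type) where
  supp : Finset V
  parent : V → Option V
  parent_eq_none : ∀ v ∉ supp, parent v = none
  mem_of_parent : ∀ {v w : V}, parent v = some w → v ∈ supp ∧ w ∈ supp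
  root_unique : ∀ v ∈ supp, ∀ w ∈ supp, parent v = none → parent w = none → v = w
  reaches_root : ∀ v ∈ supp, ∃ r ∈ supp, parent r = none ∧
    Relation.ReflTransGen (fun a b => parent a = some b) v r

namespace RTree

variable {V : Type}

/-- `T.Anc a v` : `a` is an ancestor of `v` in `T` (possibly `a = v`). -/
def Anc (T : RTree V) (a v : V) : Prop :=
  Relation.ReflTransGen (fun x y => T.parent x = some y) v a

/-- `a` is a strict ancestor of `v`. -/
def StrictAnc (T : RTree V) (a v : V) : Prop := a ≠ v ∧ T.Anc a v

/-- The set of vertices of the subtree rooted at `a` (the descendants of `a`). -/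
def descSet (T : RTree V) (a : V) : Set V := {v | T.Anc a v}

/-- The depth of a node: the number of nodes on the path from the root to it
(the root has depth 1). -/
noncomputable def depth (T : RTree V) (v : V) : ℕ := Set.ncard {a | T.Anc a v}

def IsRoot (T : RTree V) (r : V) : Prop := r ∈ T.supp ∧ T.parent r = none

end RTree

/-- The restriction of a graph to a set of vertices (keeping the ambient vertex type). -/
def restrictG {V : Type} (G : SimpleGraph V) (U : Set V) : SimpleGraph V where
  Adj a b := G.Adj a b ∧ a ∈ U ∧ b ∈ U
  symm := ⟨fun a b ⟨h, ha, hb⟩ => ⟨h.symm, hb, ha⟩⟩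
  loopless := ⟨fun a ⟨h, _, _⟩ => G.irrefl h⟩

/-- `T` is a search tree on the induced subgraph `G[U]`: its nodes are the vertices of `U`,
the subtree of every node induces a connected subgraph, and every edge of `G[U]` joins
two comparable nodes of `T`. -/
def IsSTGOn {V : Type} (G : SimpleGraph V) (U : Finset V) (T : RTree V) : Prop :=
  T.supp = U ∧
  (∀ v ∈ U, ((restrictG G ↑U).induce (T.descSet v)).Connected) ∧
  (∀ u v : V, u ∈ U → v ∈ U → G.Adj u v → T.Anc u v ∨ T.Anc v u)

/-- `T` is a search tree on the graph `G`. -/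
def IsSTG {V : Type} [Fintype V] (G : SimpleGraph V) (T : RTree V) : Prop :=
  IsSTGOn G Finset.univ T

/-- `T'` is obtained from `T` by rotating the edge `(p, c)` of `T`, where `p` is
the parent of `c`: `c` replaces `p` (becoming a child of `p`'s former parent, or the
root if `p` was the root), `p` becomes a child of `c`, `p` keeps its other children,
and each child `x` of `c` whose subtree contains a vertex of `G` adjacent to `p`
becomes a child of `p` (the other children of `c` stay children of `c`). -/
def IsRotationAt {V : Type} (G : SimpleGraph V) (T T' : RTree V) (p c : V) : Prop :=
  T.parent c = some p ∧
  T'.supp = T.supp ∧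
  T'.parent c = T.parent p ∧
  T'.parent p = some c ∧
  (∀ x : V, x ≠ p → T.parent x = some c →
    ((∃ u ∈ T.descSet x, G.Adj u p) → T'.parent x = some p) ∧
    (¬(∃ u ∈ T.descSet x, G.Adj u p) → T'.parent x = some c)) ∧
  (∀ x : V, x ≠ c → x ≠ p → T.parent x ≠ some c → T'.parent x = T.parent x)

/-- `T'` is obtained from `T` by a single rotation. -/
def IsRotation {V : Type} (G : SimpleGraph V) (T T' : RTree V) : Prop :=
  ∃ p c, IsRotationAt G T T' p c

/-- `T2` can be obtained from `T1` by exactly `k` rotations. -/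
def ReachesIn {V : Type} (G : SimpleGraph V) : ℕ → RTree V → RTree V → Prop
  | 0, T1, T2 => T1 = T2
  | k+1, T1, T2 => ∃ T', IsRotation G T1 T' ∧ ReachesIn G k T' T2

/-- Vertex type of the caterpillar `C(m_1, …, m_n)`: spine vertices `inl i` and
leg vertices `inr ⟨i, j⟩`. -/
abbrev CatV (n : ℕ) (m : Fin n → ℕ) : Type := Fin n ⊕ (Σ i : Fin n, Fin (m i))

/-- The caterpillar tree `C(m_1, …, m_n)`: the spine `s_1 - s_2 - ⋯ - s_n` is a path,
and leg `ℓ_{i,j}` is adjacent to `s_i`. -/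
def caterpillar (n : ℕ) (m : Fin n → ℕ) : SimpleGraph (CatV n m) where
  Adj x y :=
    match x, y with
    | Sum.inl i, Sum.inl j => i.val + 1 = j.val ∨ j.val + 1 = i.val
    | Sum.inl i, Sum.inr l => l.1 = i
    | Sum.inr l, Sum.inl i => l.1 = i
    | Sum.inr _, Sum.inr _ => False
  symm := ⟨by rintro (i | l) (j | l') h <;> simp_all <;> tauto⟩
  loopless := ⟨by rintro (i | l) h <;> simp_all⟩

/-- The (base 2) Shannon entropy `H(m_1, …, m_n) = ∑_{i : m_i > 0} (m_i/m) log (m/m_i)`. -/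
noncomputable def shannonH {n : ℕ} (m : Fin n → ℕ) : ℝ :=
  ∑ i, if 0 < m i then
    ((m i : ℝ) / (∑ j, (m j : ℝ))) * Real.logb 2 ((∑ j, (m j : ℝ)) / (m i : ℝ))
  else 0

/-- The parent function of the search tree `A(S, π)` on the caterpillar: the legs form a
path at the top of the tree, ordered bottom-to-top according to `π`, and the spine nodes
hang below, arranged according to the BST `S`. -/
def AParent {n : ℕ} {m : Fin n → ℕ} (S : RTree (Fin n))
    (π : Fin (∑ i, m i) ≃ (Σ i : Fin n, Fin (m i))) :
    CatV n m → Option (CatV n m) :=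
  fun x => match x with
  | Sum.inl i =>
      match S.parent i with
      | some j => some (Sum.inl j)
      | none => if h : 0 < ∑ i, m i then some (Sum.inr (π ⟨0, h⟩)) else none
  | Sum.inr l =>
      if h : (π.symm l).val + 1 < ∑ i, m i then
        some (Sum.inr (π ⟨(π.symm l).val + 1, h⟩))
      else none

/-- `T = A(S, π)`. -/
def IsA {n : ℕ} {m : Fin n → ℕ} (S : RTree (Fin n))
    (π : Fin (∑ i, m i) ≃ (Σ i : Fin n, Fin (m i))) (T : RTree (CatV n m)) : Prop :=
  T.supp = Finset.univ ∧ T.parent = AParent S π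

/-- The parent function of the search tree `B(S)` on the caterpillar: every leg `ℓ_{i,j}`
is a (childless) child of `s_i`, and the spine nodes are arranged according to `S`. -/
def BParent {n : ℕ} {m : Fin n → ℕ} (S : RTree (Fin n)) :
    CatV n m → Option (CatV n m) :=
  fun x => match x with
  | Sum.inl i => (S.parent i).map Sum.inl
  | Sum.inr l => some (Sum.inl l.1)

/-- `T = B(S)`. -/
def IsB {n : ℕ} {m : Fin n → ℕ} (S : RTree (Fin n)) (T : RTree (CatV n m)) : Prop :=
  T.supp = Finset.univ ∧ T.parent = BParent S

/-- `σ(π)`: the sequence of spine indices obtained from the leg ordering `π` by replacing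
each leg `ℓ_{i,j}` with `i`. -/
def sigmaOf {n : ℕ} {m : Fin n → ℕ}
    (π : Fin (∑ i, m i) ≃ (Σ i : Fin n, Fin (m i))) : List (Fin n) :=
  List.ofFn (fun j => (π j).1)

/-- Every leg node of `T` is bound, i.e. no leg node has a child. -/
def noFreeLegs {n : ℕ} {m : Fin n → ℕ} (T : RTree (CatV n m)) : Prop :=
  ∀ (x : CatV n m) (l : Σ i : Fin n, Fin (m i)), T.parent x ≠ some (Sum.inr l)

open Classical in
/-- The number of adjacent pairs in a list satisfying `P`. -/
noncomputable def pairAlt {α : Type} (P : α → α → Prop) : List α → ℕ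
  | [] => 0
  | [_] => 0
  | a :: b :: t => (if P a b then 1 else 0) + pairAlt P (b :: t)

open Classical in
/-- Wilber's quantity `λ(S, u, σ)`: 0 if `u` has at most one child; otherwise the number
of adjacent pairs in the restriction of `σ` to the subtree of `u` that do not both lie in
the subtree of one child of `u` and are not both equal to `u`. -/
noncomputable def wilberLam {n : ℕ} (S : RTree (Fin n)) (u : Fin n) (σ : List (Fin n)) : ℕ :=
  if (∃ v w : Fin n, v ≠ w ∧ S.parent v = some u ∧ S.parent w = some u) then
    pairAlt (fun x y =>
      ¬((x = u ∧ y = u) ∨ ∃ ch, S.parent ch = some u ∧ S.Anc ch x ∧ S.Anc ch y))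
      (σ.filter (fun x => decide (S.Anc u x)))
  else 0

/-- `λ'(S, u, σ) = λ(S, u, σ)` plus the number of occurrences of `u` in `σ`. -/
noncomputable def wilberLam' {n : ℕ} (S : RTree (Fin n)) (u : Fin n)
    (σ : List (Fin n)) : ℕ :=
  wilberLam S u σ + σ.count u

/-- Wilber's first lower bound `Λ'(S, σ) = ∑_u λ'(S, u, σ)`. -/
noncomputable def wilberL' {n : ℕ} (S : RTree (Fin n)) (σ : List (Fin n)) : ℕ :=
  ∑ u : Fin n, wilberLam' S u σ

/-- `P` is the projection `T[U]` of `T` onto `U`: its nodes are the nodes of `T` in `U`,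
and the parent of `u` in `P` is the nearest strict ancestor of `u` in `T` that lies
in `U` (which is exactly the result of pruning the vertices outside `U` one by one). -/
def IsProjOn {V : Type} [DecidableEq V] (T : RTree V) (U : Finset V) (P : RTree V) : Prop :=
  P.supp = T.supp ∩ U ∧
  ∀ u w : V, P.parent u = some w ↔
    (u ∈ U ∧ w ∈ U ∧ T.StrictAnc w u ∧ ∀ z ∈ U, T.StrictAnc z u → T.Anc z w)

/-- `P` is obtained from `T` by pruning the vertex `v`. -/
def IsPruneOf {V : Type} [DecidableEq V] (T : RTree V) (v : V) (P : RTree V) : Prop :=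
  IsProjOn T (T.supp.erase v) P

/-- `PruneSeq T l P`: `P` is obtained from `T` by successively pruning the
vertices in the list `l`, in order. -/
def PruneSeq {V : Type} [DecidableEq V] : RTree V → List V → RTree V → Prop
  | T, [], P => P = T
  | T, v :: rest, P => ∃ P', IsPruneOf T v P' ∧ PruneSeq P' rest P

/-- The number of alternations (edges whose endpoints get different colors under `f`)
on the path from the root to `z`. -/
noncomputable def altAt {V K : Type} (f : V → K) (T : RTree V) (z : V) : ℕ :=
  Set.ncard {x | T.Anc x z ∧ ∃ y, T.parent x = some y ∧ f x ≠ f y}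

/-- The alternation number of `T` w.r.t. the coloring `f`: the maximum number of
alternations on a root-to-node path. -/
noncomputable def altNum {V K : Type} (f : V → K) (T : RTree V) : ℕ :=
  T.supp.sup (fun z => altAt f T z)

/-!
Rotating `(x, y)` only changes the root-to-node paths through `x`: where `T` has
`… q, x, y, a …` or `… q, x, b …`, the tree `T'` has `… q, y, x, a …`, `… q, y, a …` or
`… q, y, x, b …`, the rest of the path being unchanged. The alternation count of a path is a
sum of color-change indicators over its edges, and in each case at most two indicators are
replaced by at most two others (the edge `x`–`y`, when kept, counts the same in both orders);
when `f x = f y` the replaced and the replacing indicators agree.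
-/

namespace RTree

variable {V : Type} (T : RTree V)

theorem parent_induction {P : V → Prop} (root : ∀ z, T.parent z = none → P z)
    (step : ∀ z w, T.parent z = some w → P w → P z) (z : V) : P z := by
  by_cases hz : z ∈ T.supp
  · obtain ⟨r, -, hr, hzr⟩ := T.reaches_root z hz
    induction hzr using Relation.ReflTransGen.head_induction_on with
    | refl => exact root r hr
    | head h _ ih => exact step _ _ h (ih (T.mem_of_parent h).2)
  · exact root z (T.parent_eq_none z hz)

theorem anc_self (a : V) : T.Anc a a := Relation.ReflTransGen.refl

variable {T}

theorem anc_of_parent_eq_some {z w : V} (h : T.parent z = some w) : T.Anc w z :=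
  Relation.ReflTransGen.single h

theorem Anc.trans {a b c : V} (hab : T.Anc a b) (hbc : T.Anc b c) : T.Anc a c :=
  Relation.ReflTransGen.trans hbc hab

theorem anc_iff_of_parent_eq_some {z w : V} (h : T.parent z = some w) (a : V) :
    T.Anc a z ↔ a = z ∨ T.Anc a w := by
  refine ⟨fun ha => ?_, ?_⟩
  · rcases Relation.ReflTransGen.cases_head ha with rfl | ⟨c, hc, hca⟩
    · exact Or.inl rfl
    · exact Or.inr (Option.some.inj (h.symm.trans hc) ▸ hca)
  · rintro (rfl | ha)
    · exact T.anc_self a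
    · exact Relation.ReflTransGen.head h ha

theorem anc_iff_of_parent_eq_none {z : V} (h : T.parent z = none) (a : V) :
    T.Anc a z ↔ a = z := by
  refine ⟨fun ha => ?_, fun ha => ha ▸ T.anc_self z⟩
  rcases Relation.ReflTransGen.cases_head ha with rfl | ⟨c, hc, -⟩
  · rfl
  · simp [h] at hc

theorem not_anc_of_parent_eq_some {z w : V} (h : T.parent z = some w) : ¬ T.Anc z w := by
  induction w using T.parent_induction generalizing z with
  | root w hw =>
    rw [anc_iff_of_parent_eq_none hw]
    rintro rfl
    simp [hw] at h
  | step w v hwv ih =>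
    intro hzw
    refine ih hwv ?_
    rcases (anc_iff_of_parent_eq_some hwv z).1 hzw with rfl | hzv
    · obtain rfl : v = z := Option.some.inj (hwv.symm.trans h)
      exact T.anc_self v
    · exact (anc_of_parent_eq_some h).trans hzv

theorem finite_setOf_anc (z : V) : {a | T.Anc a z}.Finite := by
  refine (T.supp.finite_toSet.insert z).subset fun a ha => ?_
  rcases Relation.ReflTransGen.cases_tail ha with rfl | ⟨b, -, hba⟩
  · exact Set.mem_insert a _
  · exact Set.mem_insert_of_mem _ (T.mem_of_parent hba).2

end RTree

section Alternation

variable {V K : Type} (f : V → K) {T : RTree V}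

theorem altAt_of_parent_eq_none {z : V} (h : T.parent z = none) : altAt f T z = 0 := by
  rw [altAt, ← Set.ncard_empty V]
  congr 1
  ext a
  simp only [RTree.anc_iff_of_parent_eq_none h a, Set.mem_ofPred_eq, Set.mem_empty_iff_false]
  grind

open Classical in
theorem altAt_of_parent_eq_some {z w : V} (h : T.parent z = some w) :
    altAt f T z = altAt f T w + if f z = f w then 0 else 1 := by
  have hz : z ∉ {a | T.Anc a w ∧ ∃ b, T.parent a = some b ∧ f a ≠ f b} :=
    fun hz => RTree.not_anc_of_parent_eq_some h hz.1
  split_ifs with hf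
  · rw [altAt, altAt, add_zero]
    congr 1
    ext a
    simp only [Set.mem_ofPred_eq, RTree.anc_iff_of_parent_eq_some h a]
    grind
  · have : {a | T.Anc a z ∧ ∃ b, T.parent a = some b ∧ f a ≠ f b} =
        insert z {a | T.Anc a w ∧ ∃ b, T.parent a = some b ∧ f a ≠ f b} := by
      ext a
      simp only [Set.mem_ofPred_eq, Set.mem_insert_iff, RTree.anc_iff_of_parent_eq_some h a]
      grind
    rw [altAt, this, Set.ncard_insert_of_notMem hz ((T.finite_setOf_anc w).subset fun a ha => ha.1)]
    rfl

theorem altAt_eq_of_parent_eq {T' : RTree V} {z : V}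
    (h : ∀ a, T.Anc a z → T'.parent a = T.parent a) : altAt f T' z = altAt f T z := by
  induction z using T.parent_induction with
  | root z hz =>
    rw [altAt_of_parent_eq_none f hz,
      altAt_of_parent_eq_none f ((h z (T.anc_self z)).trans hz)]
  | step z w hzw ih =>
    rw [altAt_of_parent_eq_some f hzw,
      altAt_of_parent_eq_some f ((h z (T.anc_self z)).trans hzw),
      ih fun a ha => h a (ha.trans (RTree.anc_of_parent_eq_some hzw))]

theorem abs_altNum_sub_le {T' : RTree V} (hsupp : T'.supp = T.supp) {k : ℕ}
    (h : ∀ z ∈ T.supp, |(altAt f T' z : ℤ) - altAt f T z| ≤ k) :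
    |(altNum f T' : ℤ) - altNum f T| ≤ k := by
  have h₁ : altNum f T' ≤ altNum f T + k := Finset.sup_le fun z hz => by
    have := Finset.le_sup (f := fun z => altAt f T z) (hsupp ▸ hz)
    have := abs_le.1 (h z (hsupp ▸ hz))
    simp only [altNum] at *
    omega
  have h₂ : altNum f T ≤ altNum f T' + k := Finset.sup_le fun z hz => by
    have := Finset.le_sup (f := fun z => altAt f T' z) (hsupp ▸ hz)
    have := abs_le.1 (h z hz)
    simp only [altNum] at *
    omega
  rw [abs_le]
  omega

end Alternation

namespace IsRotationAt

variable {V K : Type} {G : SimpleGraph V} {T T' : RTree V} {x y : V}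

theorem parent_eq_of_not_anc (hrot : IsRotationAt G T T' x y) {a : V} (ha : ¬ T.Anc x a) :
    T'.parent a = T.parent a := by
  have hxy : T.Anc x y := RTree.anc_of_parent_eq_some hrot.1
  exact hrot.2.2.2.2.2 a (fun h => ha (h ▸ hxy)) (fun h => ha (h ▸ T.anc_self x))
    fun h => ha (hxy.trans (RTree.anc_of_parent_eq_some h))

theorem altAt_eq_of_not_anc (hrot : IsRotationAt G T T' x y) (f : V → K) {z : V}
    (hz : ¬ T.Anc x z) : altAt f T' z = altAt f T z :=
  altAt_eq_of_parent_eq f fun _ ha => hrot.parent_eq_of_not_anc fun hxa => hz (hxa.trans ha)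

open Classical in
theorem abs_altAt_child_sub_altAt_parent_le (hrot : IsRotationAt G T T' x y) (f : V → K) :
    |(altAt f T' y : ℤ) - altAt f T x| ≤ if f x = f y then 0 else 1 := by
  cases hq : T.parent x with
  | none =>
    rw [altAt_of_parent_eq_none f hq, altAt_of_parent_eq_none f (hrot.2.2.1.trans hq)]
    split_ifs <;> simp
  | some q =>
    rw [altAt_of_parent_eq_some f hq, altAt_of_parent_eq_some f (hrot.2.2.1.trans hq),
      hrot.altAt_eq_of_not_anc f (RTree.not_anc_of_parent_eq_some hq)]
    grind

open Classical in
theorem abs_altAt_sub_le (hrot : IsRotationAt G T T' x y) (f : V → K) (z : V) :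
    |(altAt f T' z : ℤ) - altAt f T z| ≤ if f x = f y then 0 else 2 := by
  have hpivot := hrot.abs_altAt_child_sub_altAt_parent_le f
  obtain ⟨hyx, -, -, hxy', hchild, hother⟩ := hrot
  have hyT := altAt_of_parent_eq_some f hyx
  have hxT' := altAt_of_parent_eq_some f hxy'
  have hx : |(altAt f T' x : ℤ) - altAt f T x| ≤ if f x = f y then 0 else 2 := by grind
  induction z using T.parent_induction with
  | root z hz =>
    by_cases hzx : z = x
    · exact hzx ▸ hx
    have hzy : z ≠ y := fun h => by simp [h, hyx] at hz
    rw [altAt_of_parent_eq_none f hz,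
      altAt_of_parent_eq_none f ((hother z hzy hzx (by simp [hz])).trans hz)]
    split_ifs <;> simp
  | step z w hzw ih =>
    by_cases hzx : z = x
    · exact hzx ▸ hx
    by_cases hzy : z = y
    · subst hzy
      obtain rfl : w = x := Option.some.inj (hzw.symm.trans hyx)
      grind
    by_cases hwy : w = y
    · subst hwy
      rw [altAt_of_parent_eq_some f hzw]
      by_cases hadj : ∃ u ∈ T.descSet z, G.Adj u x
      · rw [altAt_of_parent_eq_some f ((hchild z hzx hzw).1 hadj)]
        grind
      · rw [altAt_of_parent_eq_some f ((hchild z hzx hzw).2 hadj)]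
        grind
    · have hzy' : T.parent z ≠ some y := fun h => hwy (Option.some.inj (hzw.symm.trans h))
      rw [altAt_of_parent_eq_some f hzw,
        altAt_of_parent_eq_some f ((hother z hzy hzx hzy').trans hzw)]
      grind

end IsRotationAt

theorem rotation_alternation_number_general {V K : Type}
    (G : SimpleGraph V) (f : V → K)
    (T T' : RTree V)
    (x y : V) (hrot : IsRotationAt G T T' x y) :
    (f x = f y → altNum f T' = altNum f T) ∧
    (f x ≠ f y → |(altNum f T' : ℤ) - (altNum f T : ℤ)| ≤ 2) := by
  classical
  refine ⟨fun hf => ?_, fun hf => ?_⟩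
  · have h := abs_altNum_sub_le f hrot.2.1 (k := 0) fun z _ => by
      simpa [hf] using hrot.abs_altAt_sub_le f z
    simpa [sub_eq_zero] using h
  · exact abs_altNum_sub_le f hrot.2.1 (k := 2) fun z _ => by
      simpa [hf] using hrot.abs_altAt_sub_le f z

/-- effect of a rotation on the alternation number w.r.t. a partition
(given by a coloring `f`). -/
theorem rotation_alternation_number {V K : Type} [Fintype V]
    (G : SimpleGraph V) (hG : G.IsTree) (f : V → K)
    (T T' : RTree V) (hT : IsSTG G T)
    (x y : V) (hrot : IsRotationAt G T T' x y) :
    (f x = f y → altNum f T' = altNum f T) ∧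
    (f x ≠ f y → |(altNum f T' : ℤ) - (altNum f T : ℤ)| ≤ 2) :=
  rotation_alternation_number_general G f T T' x y hrot
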